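/- arXiv:1012.3825 — 3 statements merged into one kernel-verified Lean document; each statement's English description precedes it below -/
import Mathlib

section
/- (Hurwitz transitivity for the symmetric group) Let n ≥ 2 and let c be an n-cycle in S_n. The Hurwitz action of the braid group B_{n−1} on the set of reduced factorizations of c into n−1 transpositions is transitive. Concretely: any tuple (t_1,…,t_{n−1}) of transpositions with product c can be transformed into any other such tuple by a sequence of moves, where a move replaces adjacent entries (t_i, t_{i+1}) by (t_i t_{i+1} t_i⁻¹, t_i) or by (t_{i+1}, t_{i+1}⁻¹ t_i t_{i+1}). -/
/-!
Fix a point `x` moved by the cycle `σ`. Hurwitz moves bring any factorization of a permutation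
`σ` into transpositions to one whose first factor is `(x σ(x))`: by induction on the length,
write it as `t` followed by a factorization of `ρ` already moved to begin with `(x ρ(x))`.
The transposition `t` fixes `x` or `ρ(x)` (otherwise `t (ρ x) = x`, so `σ` fixes `x`), and one
move turns `t, (x ρ(x))` into `(x σ(x)), s`. The remaining factors form a minimal factorization
of the cycle `(x σ(x)) σ`, one shorter, so induction on the length concludes.
-/

/-- One Hurwitz move on a tuple: replace adjacent entries `(a, b)` by
`(a b a⁻¹, a)` or by `(b, b⁻¹ a b)`. -/
def HurwitzStep {G : Type*} [Group G] (l l' : List G) : Prop :=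
  ∃ (l₁ : List G) (a b : G) (l₂ : List G),
    l = l₁ ++ a :: b :: l₂ ∧
    (l' = l₁ ++ (a * b * a⁻¹) :: a :: l₂ ∨
     l' = l₁ ++ b :: (b⁻¹ * a * b) :: l₂)

open Relation Finset

namespace HurwitzStep

variable {G : Type*} [Group G] {l l' : List G}

theorem symm (h : HurwitzStep l l') : HurwitzStep l' l := by
  obtain ⟨l₁, a, b, l₂, rfl, rfl | rfl⟩ := h
  · refine ⟨l₁, a * b * a⁻¹, a, l₂, rfl, Or.inr ?_⟩
    simp [mul_assoc]
  · refine ⟨l₁, b, b⁻¹ * a * b, l₂, rfl, Or.inl ?_⟩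
    simp [mul_assoc]

instance : Std.Symm (HurwitzStep (G := G)) := ⟨fun _ _ => symm⟩

theorem prod_eq (h : HurwitzStep l l') : l.prod = l'.prod := by
  obtain ⟨l₁, a, b, l₂, rfl, rfl | rfl⟩ := h <;> simp [mul_assoc]

theorem length_eq (h : HurwitzStep l l') : l.length = l'.length := by
  obtain ⟨l₁, a, b, l₂, rfl, rfl | rfl⟩ := h <;> simp

theorem cons (a : G) (h : HurwitzStep l l') : HurwitzStep (a :: l) (a :: l') := by
  obtain ⟨l₁, x, y, l₂, rfl, h'⟩ := h
  exact ⟨a :: l₁, x, y, l₂, rfl, by simpa using h'⟩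

theorem forall_mem {P : G → Prop} (hP : ∀ g x, P x → P (g * x * g⁻¹))
    (h : HurwitzStep l l') (hl : ∀ t ∈ l, P t) : ∀ t ∈ l', P t := by
  obtain ⟨l₁, a, b, l₂, rfl, rfl | rfl⟩ := h <;>
    simp only [List.mem_append, List.mem_cons, or_imp, forall_and, forall_eq] at hl ⊢
  · exact ⟨hl.1, hP a b hl.2.2.1, hl.2.1, hl.2.2.2⟩
  · exact ⟨hl.1, hl.2.2.1, by simpa using hP b⁻¹ a hl.2.1, hl.2.2.2⟩

theorem reflTransGen_cons (a : G) (h : ReflTransGen HurwitzStep l l') :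
    ReflTransGen HurwitzStep (a :: l) (a :: l') :=
  h.lift (a :: ·) fun _ _ => cons a

theorem reflTransGen_prod_eq (h : ReflTransGen HurwitzStep l l') : l.prod = l'.prod := by
  simpa [reflTransGen_eq_self] using h.lift List.prod fun _ _ => prod_eq

theorem reflTransGen_length_eq (h : ReflTransGen HurwitzStep l l') : l.length = l'.length := by
  simpa [reflTransGen_eq_self] using h.lift List.length fun _ _ => length_eq

theorem reflTransGen_forall_mem {P : G → Prop} (hP : ∀ g x, P x → P (g * x * g⁻¹))
    (h : ReflTransGen HurwitzStep l l') (hl : ∀ t ∈ l, P t) : ∀ t ∈ l', P t := by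
  induction h with
  | refl => exact hl
  | tail _ h ih => exact h.forall_mem hP ih

end HurwitzStep

namespace Equiv.Perm

variable {α : Type*} [DecidableEq α] {t : Perm α} {x y : α}

theorem IsSwap.conj (g : Perm α) (h : t.IsSwap) : (g * t * g⁻¹).IsSwap := by
  obtain ⟨u, v, huv, rfl⟩ := h
  exact ⟨g u, g v, g.injective.ne huv, (swap_apply_apply g u v).symm⟩

theorem IsSwap.eq_swap_apply (h : t.IsSwap) (hx : t x ≠ x) : t = swap x (t x) := by
  obtain ⟨u, v, -, rfl⟩ := h
  simp only [swap_apply_def] at hx ⊢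
  split_ifs at hx ⊢ <;> simp_all [swap_comm]

theorem IsSwap.apply_eq_of_ne (h : t.IsSwap) (hxy : x ≠ y) (hx : t x ≠ x) (hy : t y ≠ y) :
    t y = x := by
  obtain ⟨u, v, -, rfl⟩ := h
  simp only [swap_apply_def] at hx hy ⊢
  split_ifs at hx hy ⊢ <;> simp_all

theorem card_support_swap_mul_add_one [Fintype α] {f : Perm α} (hx : f x ≠ x)
    (hffx : f (f x) ≠ x) : #(swap x (f x) * f).support + 1 = #f.support := by
  rw [support_swap_mul_eq f x hffx, sdiff_singleton_eq_erase,
    Finset.card_erase_add_one (mem_support.2 hx)]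

theorem IsCycle.apply_apply_ne [Fintype α] {f : Perm α} (hf : f.IsCycle) (hx : f x ≠ x)
    (h3 : 2 < #f.support) : f (f x) ≠ x := fun hffx => by
  rw [hf.eq_swap_of_apply_apply_eq_self hx hffx, card_support_swap hx.symm] at h3
  exact h3.false

def IsSwapFactorization (σ : Perm α) (l : List (Perm α)) : Prop :=
  (∀ t ∈ l, t.IsSwap) ∧ l.prod = σ

theorem IsSwapFactorization.of_reflTransGen {σ : Perm α} {l l' : List (Perm α)}
    (hl : IsSwapFactorization σ l) (h : ReflTransGen HurwitzStep l l') :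
    IsSwapFactorization σ l' :=
  ⟨HurwitzStep.reflTransGen_forall_mem (fun g _ ht => ht.conj g) h hl.1,
    (HurwitzStep.reflTransGen_prod_eq h) ▸ hl.2⟩

theorem IsSwapFactorization.of_cons {σ : Perm α} {r : List (Perm α)}
    (h : IsSwapFactorization σ (swap x y :: r)) : IsSwapFactorization (swap x y * σ) r := by
  refine ⟨fun t ht => h.1 t (List.mem_cons_of_mem _ ht), ?_⟩
  rw [← h.2, List.prod_cons, swap_mul_self_mul]

theorem hurwitzStep_cons_swap (r : List (Perm α)) (h : t x = x ∨ t y = y) :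
    ∃ s, HurwitzStep (t :: swap x y :: r) (swap x (t y) :: s :: r) := by
  rcases h with hx | hy
  · refine ⟨t, [], t, swap x y, r, rfl, Or.inl ?_⟩
    rw [← swap_apply_apply, hx]
    rfl
  · exact ⟨_, [], t, swap x y, r, rfl, Or.inr (by rw [hy]; rfl)⟩

theorem exists_reflTransGen_swap_cons {l : List (Perm α)} (hl : ∀ t ∈ l, t.IsSwap)
    (hx : l.prod x ≠ x) : ∃ r, ReflTransGen HurwitzStep l (swap x (l.prod x) :: r) := by
  induction l with
  | nil => simp at hx
  | cons t rest ih =>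
    have ht := hl t List.mem_cons_self
    rw [List.prod_cons, mul_apply] at hx ⊢
    by_cases hfix : rest.prod x = x
    · rw [hfix] at hx ⊢
      exact ⟨rest, by rw [← ht.eq_swap_apply hx]⟩
    obtain ⟨r, hr⟩ := ih (fun s hs => hl s (List.mem_cons_of_mem t hs)) hfix
    have hfix' : t x = x ∨ t (rest.prod x) = rest.prod x := by
      by_contra! h
      exact hx (ht.apply_eq_of_ne (Ne.symm hfix) h.1 h.2)
    obtain ⟨s, hs⟩ := hurwitzStep_cons_swap r hfix'
    exact ⟨s :: r, (HurwitzStep.reflTransGen_cons t hr).tail hs⟩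

theorem IsCycle.reflTransGen_hurwitzStep [Fintype α] {σ : Perm α} (hσ : σ.IsCycle)
    {l l' : List (Perm α)} (hl : IsSwapFactorization σ l) (hl' : IsSwapFactorization σ l')
    (hlen : l.length + 1 = #σ.support) (hlen' : l'.length + 1 = #σ.support) :
    ReflTransGen HurwitzStep l l' := by
  induction hk : l.length generalizing σ l l' with
  | zero =>
    rw [List.length_eq_zero_iff.1 hk, List.length_eq_zero_iff.1 (by omega : l'.length = 0)]
  | succ k ih =>
    obtain ⟨x, hx, -⟩ := id hσ
    obtain ⟨r, hr⟩ := exists_reflTransGen_swap_cons hl.1 (x := x) (by rwa [hl.2])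
    obtain ⟨r', hr'⟩ := exists_reflTransGen_swap_cons hl'.1 (x := x) (by rwa [hl'.2])
    rw [hl.2] at hr
    rw [hl'.2] at hr'
    have hr_len := HurwitzStep.reflTransGen_length_eq hr
    have hr'_len := HurwitzStep.reflTransGen_length_eq hr'
    simp only [List.length_cons] at hr_len hr'_len
    suffices ReflTransGen HurwitzStep r r' from
      hr.trans ((HurwitzStep.reflTransGen_cons _ this).trans (symm_of _ hr'))
    rcases k with _ | k
    · rw [List.length_eq_zero_iff.1 (by omega : r.length = 0),
        List.length_eq_zero_iff.1 (by omega : r'.length = 0)]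
    have hffx := hσ.apply_apply_ne hx (by omega)
    have hcard := card_support_swap_mul_add_one hx hffx
    exact ih (hσ.swap_mul hx hffx) (hl.of_reflTransGen hr).of_cons
      (hl'.of_reflTransGen hr').of_cons (by omega) (by omega) (by omega)

end Equiv.Perm

theorem hurwitz_transitive_general (n : ℕ)
    (c : Equiv.Perm (Fin n)) (hc : c.IsCycle ∧ c.support.card = n)
    (l l' : List (Equiv.Perm (Fin n)))
    (hl : l.length = n - 1 ∧ (∀ t ∈ l, t.IsSwap) ∧ l.prod = c)
    (hl' : l'.length = n - 1 ∧ (∀ t ∈ l', t.IsSwap) ∧ l'.prod = c) :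
    Relation.ReflTransGen HurwitzStep l l' := by
  have hcard := hc.1.two_le_card_support
  exact hc.1.reflTransGen_hurwitzStep hl.2 hl'.2 (by omega) (by omega)

/-- Hurwitz transitivity: any two reduced factorizations of an `n`-cycle `c`
into `n-1` transpositions are related by a sequence of Hurwitz moves. -/
theorem hurwitz_transitive (n : ℕ) (hn : 2 ≤ n)
    (c : Equiv.Perm (Fin n)) (hc : c.IsCycle ∧ c.support.card = n)
    (l l' : List (Equiv.Perm (Fin n)))
    (hl : l.length = n - 1 ∧ (∀ t ∈ l, t.IsSwap) ∧ l.prod = c)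
    (hl' : l'.length = n - 1 ∧ (∀ t ∈ l', t.IsSwap) ∧ l'.prod = c) :
    Relation.ReflTransGen HurwitzStep l l' :=
  hurwitz_transitive_general n c hc l l' hl hl'
end

section
/- Let R = ℂ[T_1,…,T_{m}] and let P = X^n + b_1 X^{n−1} + ⋯ + b_n ∈ R[X] with b_i ∈ R, where m = n−1. Let Q(T, Y) = P(T, Y − b_1/n), so that Q = Y^n + a_2 Y^{n−2} + ⋯ + a_n with a_i ∈ R. Define J(P) = det of the (m+1)×(m+1) Jacobian matrix of the tuple (P, ∂P/∂X, …, ∂^{n−1}P/∂X^{n−1}) with respect to the variables (T_1,…,T_m, X), and J(Q) analogously with Y in place of X. Then J(P) = J(Q); moreover J(P) does not involve X and equals, up to a nonzero scalar, the Jacobian determinant det(∂a_i/∂T_j)_{2≤i≤n, 1≤j≤n−1}. -/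
/-!
The substitution `X ↦ X - c` with `c` free of `X` commutes with `∂/∂X` and its Jacobian
matrix has determinant `1`, so by the chain rule `J(P(X - c)) = J(P)(X - c)`. By the
Leibniz rule `∂J(P)/∂X` is a sum of determinants in which one row is replaced by the next
one (a repeated row) or the last row by the gradient of the constant `∂ⁿP/∂Xⁿ = n!` (a zero
row); hence `J(P)` is free of `X` and `J(Q) = J(P)`.
Being free of `X`, `J(Q)` can be computed at `X = 0`: there row `i` has entries `i! ∂a/∂T_j`
for the coefficient `a` of `Xⁱ`, and the last row is `(0, …, 0, n!)` because `Q` has no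
`X^(n-1)` term. Expanding along it leaves the Jacobian matrix of the remaining coefficients,
with rows reversed and scaled by `i!`.
-/

open MvPolynomial

/-- The Lyashko–Looijenga Jacobian of a polynomial `P` in the variables
`T_1, …, T_m, X` (where `X` is the last variable): the determinant of the
Jacobian matrix of the tuple `(P, ∂P/∂X, …, ∂^m P/∂X^m)` with respect to
`(T_1, …, T_m, X)`. -/
noncomputable def LLJacobian {m : ℕ} (P : MvPolynomial (Fin (m + 1)) ℂ) :
    MvPolynomial (Fin (m + 1)) ℂ :=
  Matrix.det (fun i j : Fin (m + 1) =>
    pderiv j ((pderiv (Fin.last m))^[(i : ℕ)] P))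

open scoped Nat

theorem Matrix.det_eq_mul_det_submatrix_castSucc {R : Type*} [CommRing R] {m : ℕ}
    (A : Matrix (Fin (m + 1)) (Fin (m + 1)) R) (h : ∀ j : Fin m, A (Fin.last m) j.castSucc = 0) :
    A.det = A (Fin.last m) (Fin.last m) * (A.submatrix Fin.castSucc Fin.castSucc).det := by
  rw [Matrix.det_succ_row A (Fin.last m), Fin.sum_univ_castSucc]
  simp [h, Fin.succAbove_last]

theorem Matrix.det_one_updateRow {n R : Type*} [DecidableEq n] [Fintype n] [CommRing R]
    (i : n) (v : n → R) : ((1 : Matrix n n R).updateRow i v).det = v i := by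
  rw [← Matrix.det_transpose, ← Matrix.updateCol_transpose, Matrix.transpose_one,
    ← Matrix.cramer_apply, Matrix.cramer_one]
  rfl

namespace Derivation

variable {R A : Type*} [CommSemiring R]

theorem leibniz_finset_prod [CommSemiring A] [Algebra R A] (D : Derivation R A A) {ι : Type*}
    [DecidableEq ι] (s : Finset ι) (f : ι → A) :
    D (∏ i ∈ s, f i) = ∑ i ∈ s, (∏ j ∈ s.erase i, f j) * D (f i) := by
  induction s using Finset.induction_on with
  | empty => simp
  | @insert a s ha ih =>
    rw [Finset.prod_insert ha, D.leibniz, Finset.sum_insert ha, Finset.erase_insert ha, ih,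
      smul_eq_mul, smul_eq_mul, Finset.mul_sum, add_comm]
    congr 1
    refine Finset.sum_congr rfl fun i hi => ?_
    rw [Finset.erase_insert_of_ne (ne_of_mem_of_not_mem hi ha).symm,
      Finset.prod_insert fun h => ha (Finset.mem_of_mem_erase h)]
    ring

theorem map_det [CommRing A] [Algebra R A] (D : Derivation R A A) {n : Type*} [DecidableEq n]
    [Fintype n] (M : Matrix n n A) :
    D M.det = ∑ i, (M.updateRow i fun j => D (M i j)).det := by
  have det_eq (N : Matrix n n A) :
      N.det = ∑ σ : Equiv.Perm n, σ.sign • ∏ i, N i (σ i) := by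
    rw [← N.det_transpose, Matrix.det_apply]; rfl
  simp only [det_eq, map_sum, map_zsmul_unit, leibniz_finset_prod, Finset.smul_sum]
  rw [Finset.sum_comm]
  refine Finset.sum_congr rfl fun i _ => Finset.sum_congr rfl fun σ _ => ?_
  rw [← Finset.mul_prod_erase _ _ (Finset.mem_univ i), Matrix.updateRow_self, mul_comm]
  congr 2
  exact Finset.prod_congr rfl fun j hj => by
    rw [Matrix.updateRow_ne (Finset.ne_of_mem_erase hj)]

end Derivation

namespace MvPolynomial

section CommSemiring

variable {R σ : Type*} [CommSemiring R]

theorem pderiv_comm (i j : σ) (f : MvPolynomial σ R) :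
    pderiv i (pderiv j f) = pderiv j (pderiv i f) := by
  classical
  induction f using MvPolynomial.induction_on with
  | C a => simp
  | add p q hp hq => simp [hp, hq]
  | mul_X p k ih =>
    simp only [pderiv_mul, map_add, pderiv_X, ih, Pi.single_apply]
    split_ifs <;> simp only [mul_one, mul_zero, add_zero, map_zero, pderiv_one]
    ring

theorem pderiv_aeval {τ : Type*} [Fintype σ] (f : σ → MvPolynomial τ R) (j : τ)
    (F : MvPolynomial σ R) :
    pderiv j (aeval f F) = ∑ k, aeval f (pderiv k F) * pderiv j (f k) := by
  classical
  induction F using MvPolynomial.induction_on with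
  | C a => simp
  | add p q hp hq => simp only [map_add, hp, hq, add_mul, Finset.sum_add_distrib]
  | mul_X p k ih =>
    simp only [map_mul, aeval_X, pderiv_mul, ih, map_add, pderiv_X, Pi.single_apply, add_mul,
      Finset.sum_add_distrib, Finset.sum_mul]
    simp [mul_right_comm]

theorem notMem_vars_of_pderiv_eq_zero [IsAddTorsionFree R] {i : σ} {p : MvPolynomial σ R}
    (h : pderiv i p = 0) : i ∉ p.vars := by
  classical
  rw [mem_vars_iff_mem_support]
  rintro ⟨d, hd, hid⟩
  have hd' : d - Finsupp.single i 1 + Finsupp.single i 1 = d := tsub_add_cancel_of_le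
    (Finsupp.single_le_iff.mpr (Nat.one_le_iff_ne_zero.mpr (Finsupp.mem_support_iff.mp hid)))
  have := coeff_pderiv (i := i) p (d - Finsupp.single i 1)
  rw [h, hd', coeff_zero, eq_comm, mul_comm, ← Nat.cast_succ, ← nsmul_eq_mul,
    nsmul_eq_zero_iff_right (Nat.succ_ne_zero _)] at this
  exact mem_support_iff.mp hd this

theorem iterate_pderiv_eq_coe_pow (i : σ) (k : ℕ) :
    (pderiv i)^[k] = ⇑((pderiv i).toLinearMap ^ k : Module.End R (MvPolynomial σ R)) :=
  (Module.End.coe_pow _ k).symm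

theorem iterate_pderiv_mul_X_pow {i : σ} {g : MvPolynomial σ R} (hg : pderiv i g = 0)
    (k e : ℕ) : (pderiv i)^[k] (g * X i ^ e) = e.descFactorial k • (g * X i ^ (e - k)) := by
  induction k with
  | zero => simp
  | succ k ih =>
    rw [Function.iterate_succ_apply', ih, map_nsmul, pderiv_mul, hg, pderiv_pow, pderiv_X_self,
      Nat.descFactorial_succ, mul_comm (e - k), mul_nsmul, Nat.sub_sub]
    simp [nsmul_eq_mul, mul_left_comm]

variable [DecidableEq σ]

theorem aeval_update_X_of_pderiv_eq_zero [IsAddTorsionFree R] {i : σ} {p : MvPolynomial σ R}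
    (q : MvPolynomial σ R) (h : pderiv i p = 0) : aeval (Function.update X i q) p = p := by
  conv_rhs => rw [← aeval_X_left_apply p]
  refine hom_congr_vars (by ext; simp) (fun k hk _ => ?_) rfl
  have : k ≠ i := fun hki => notMem_vars_of_pderiv_eq_zero h (hki ▸ hk)
  simp [Function.update_of_ne this]

theorem aeval_update_zero_iterate_pderiv_mul_X_pow [IsAddTorsionFree R] {i : σ}
    {g : MvPolynomial σ R} (hg : pderiv i g = 0) (k e : ℕ) :
    aeval (Function.update X i 0) ((pderiv i)^[k] (g * X i ^ e)) =
      if e = k then k ! • g else 0 := by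
  rw [iterate_pderiv_mul_X_pow hg, map_nsmul, map_mul, map_pow, aeval_X, Function.update_self,
    aeval_update_X_of_pderiv_eq_zero 0 hg]
  split_ifs with h
  · simp [h, Nat.descFactorial_self]
  rcases lt_or_gt_of_ne h with hlt | hgt
  · simp [Nat.descFactorial_eq_zero_iff_lt.mpr hlt]
  · simp [zero_pow (Nat.sub_ne_zero_of_lt hgt)]

theorem of_pderiv_update_X (i : σ) (q : MvPolynomial σ R) :
    (Matrix.of fun k j => pderiv j (Function.update X i q k)) =
      (1 : Matrix σ σ (MvPolynomial σ R)).updateRow i fun j => pderiv j q := by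
  ext k j
  rcases eq_or_ne k i with rfl | hk
  · simp
  · simp [hk, pderiv_X, Matrix.one_apply, Pi.single_apply]

end CommSemiring

section Translation

variable {R σ : Type*} [CommRing R] [DecidableEq σ] {i : σ} {c : MvPolynomial σ R}

theorem det_pderiv_update_X_sub [Fintype σ] (hc : pderiv i c = 0) :
    (Matrix.of fun k j => pderiv j (Function.update X i (X i - c) k)).det = 1 := by
  rw [of_pderiv_update_X, Matrix.det_one_updateRow]
  simp [hc]

theorem commute_pderiv_aeval_update_X_sub [Fintype σ] (hc : pderiv i c = 0) :
    Function.Commute (pderiv i) (aeval (Function.update X i (X i - c))) := fun F => by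
  rw [pderiv_aeval, Finset.sum_eq_single_of_mem i (Finset.mem_univ i) fun k _ hk => by
    rw [Function.update_of_ne hk, pderiv_X_of_ne hk, mul_zero]]
  simp [hc]

end Translation

end MvPolynomial

section MonicInLast

variable {R : Type*} [CommSemiring R] {m : ℕ}

theorem pderiv_last_rename_castSucc (g : MvPolynomial (Fin m) R) :
    pderiv (Fin.last m) (rename Fin.castSucc g) = 0 :=
  pderiv_eq_zero_of_notMem_vars fun h => by
    obtain ⟨k, -, hk⟩ := Finset.mem_image.mp (vars_rename _ g h)
    exact (Fin.castSucc_lt_last k).ne hk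

noncomputable def monicInLast (c : Fin (m + 1) → MvPolynomial (Fin m) R) :
    MvPolynomial (Fin (m + 1)) R :=
  X (Fin.last m) ^ (m + 1) +
    ∑ t : Fin (m + 1), rename Fin.castSucc (c t) * X (Fin.last m) ^ (m - t)

theorem iterate_pderiv_last_monicInLast (c : Fin (m + 1) → MvPolynomial (Fin m) R) :
    (pderiv (Fin.last m))^[m + 1] (monicInLast c) = C ((m + 1)! : R) := by
  have hpow := iterate_pderiv_mul_X_pow (pderiv_one (i := Fin.last m) (R := R)) (m + 1) (m + 1)
  have hterm (t : Fin (m + 1)) :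
      (pderiv (Fin.last m))^[m + 1] (rename Fin.castSucc (c t) * X (Fin.last m) ^ (m - t)) =
        0 := by
    rw [iterate_pderiv_mul_X_pow (pderiv_last_rename_castSucc _),
      Nat.descFactorial_eq_zero_iff_lt.mpr (by omega), zero_smul]
  rw [monicInLast, iterate_pderiv_eq_coe_pow, map_add, map_sum, ← iterate_pderiv_eq_coe_pow,
    ← one_mul (X _ ^ _), hpow, Finset.sum_eq_zero fun t _ => hterm t, add_zero,
    Nat.descFactorial_self, Nat.sub_self, pow_zero, mul_one, nsmul_one, map_natCast]

theorem pderiv_castSucc_monicInLast (c : Fin (m + 1) → MvPolynomial (Fin m) R) (j : Fin m) :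
    pderiv (Fin.castSucc j) (monicInLast c) =
      ∑ t : Fin (m + 1), rename Fin.castSucc (pderiv j (c t)) * X (Fin.last m) ^ (m - t) := by
  simp only [monicInLast, map_add, map_sum, pderiv_mul, pderiv_pow,
    pderiv_X_of_ne (Fin.castSucc_lt_last j).ne', pderiv_rename (Fin.castSucc_injective m),
    mul_zero, zero_add, add_zero]

theorem aeval_update_zero_iterate_pderiv_last_sum [IsAddTorsionFree R]
    (d : Fin (m + 1) → MvPolynomial (Fin m) R) (r : Fin (m + 1)) :
    aeval (Function.update X (Fin.last m) 0) ((pderiv (Fin.last m))^[r]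
        (∑ t : Fin (m + 1), rename Fin.castSucc (d t) * X (Fin.last m) ^ (m - t))) =
      r ! • rename Fin.castSucc (d r.rev) := by
  rw [iterate_pderiv_eq_coe_pow, map_sum, map_sum]
  simp only [← iterate_pderiv_eq_coe_pow,
    aeval_update_zero_iterate_pderiv_mul_X_pow (pderiv_last_rename_castSucc _)]
  rw [Finset.sum_eq_single_of_mem r.rev (Finset.mem_univ _) fun t _ ht => if_neg ?_]
  · rw [if_pos (by rw [Fin.val_rev]; omega)]
  · rw [Ne, Fin.ext_iff, Fin.val_rev] at ht
    omega

end MonicInLast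

section LLJacobian

variable {m : ℕ}

noncomputable def LLMatrix (P : MvPolynomial (Fin (m + 1)) ℂ) :
    Matrix (Fin (m + 1)) (Fin (m + 1)) (MvPolynomial (Fin (m + 1)) ℂ) :=
  Matrix.of fun i j => pderiv j ((pderiv (Fin.last m))^[i] P)

theorem LLJacobian_eq_det (P : MvPolynomial (Fin (m + 1)) ℂ) :
    LLJacobian P = (LLMatrix P).det :=
  rfl

theorem LLJacobian_aeval_update_X_sub {c : MvPolynomial (Fin (m + 1)) ℂ}
    (hc : pderiv (Fin.last m) c = 0) (P : MvPolynomial (Fin (m + 1)) ℂ) :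
    LLJacobian (aeval (Function.update X (Fin.last m) (X (Fin.last m) - c)) P) =
      aeval (Function.update X (Fin.last m) (X (Fin.last m) - c)) (LLJacobian P) := by
  set shift := Function.update X (Fin.last m) (X (Fin.last m) - c)
  have chain_rule : LLMatrix (aeval shift P) =
      (LLMatrix P).map (aeval shift) * Matrix.of fun k j => pderiv j (shift k) := by
    ext i j
    rw [LLMatrix, Matrix.of_apply, (commute_pderiv_aeval_update_X_sub hc).iterate_left,
      pderiv_aeval]
    rfl
  rw [LLJacobian_eq_det, LLJacobian_eq_det, chain_rule, Matrix.det_mul,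
    det_pderiv_update_X_sub hc, mul_one, AlgHom.map_det, AlgHom.mapMatrix_apply]

theorem pderiv_last_LLJacobian_eq_zero {P : MvPolynomial (Fin (m + 1)) ℂ} {a : ℂ}
    (h : (pderiv (Fin.last m))^[m + 1] P = C a) : pderiv (Fin.last m) (LLJacobian P) = 0 := by
  rw [LLJacobian_eq_det, Derivation.map_det]
  refine Finset.sum_eq_zero fun i _ => ?_
  have next_row (j : Fin (m + 1)) :
      pderiv (Fin.last m) (LLMatrix P i j) = pderiv j ((pderiv (Fin.last m))^[i + 1] P) := by
    rw [LLMatrix, Matrix.of_apply, pderiv_comm, Function.iterate_succ_apply']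
  rcases Fin.eq_castSucc_or_eq_last i with ⟨i, rfl⟩ | rfl
  · refine Matrix.det_zero_of_row_eq (Fin.castSucc_lt_succ (i := i)).ne (funext fun j => ?_)
    rw [Matrix.updateRow_self, Matrix.updateRow_ne (Fin.castSucc_lt_succ (i := i)).ne', next_row]
    rfl
  · refine Matrix.det_eq_zero_of_row_eq_zero (Fin.last m) fun j => ?_
    rw [Matrix.updateRow_self, next_row, Fin.val_last, h, pderiv_C]

theorem aeval_update_zero_LLJacobian_monicInLast {c : Fin (m + 1) → MvPolynomial (Fin m) ℂ}
    (hc : c 0 = 0) :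
    aeval (Function.update X (Fin.last m) 0) (LLJacobian (monicInLast c)) =
      C ((((m + 1)! * ∏ i : Fin m, (i : ℕ)! : ℕ) : ℂ) *
          ((Equiv.Perm.sign (Fin.revPerm : Equiv.Perm (Fin m)) : ℤ) : ℂ)) *
        rename Fin.castSucc (Matrix.of fun i j : Fin m => pderiv j (c i.succ)).det := by
  set ψ := aeval (R := ℂ) (Function.update X (Fin.last m) (0 : MvPolynomial (Fin (m + 1)) ℂ))
  have entry (r : Fin (m + 1)) (j : Fin m) : ψ (LLMatrix (monicInLast c) r j.castSucc) =
      r ! • rename Fin.castSucc (pderiv j (c r.rev)) := by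
    rw [LLMatrix, Matrix.of_apply,
      (show Function.Commute (pderiv _) (pderiv _) from pderiv_comm _ _).iterate_right,
      pderiv_castSucc_monicInLast, aeval_update_zero_iterate_pderiv_last_sum]
  have corner : ψ (LLMatrix (monicInLast c) (Fin.last m) (Fin.last m)) = (m + 1)! := by
    rw [LLMatrix, Matrix.of_apply, Fin.val_last,
      ← Function.iterate_succ_apply' (pderiv (Fin.last m)),
      iterate_pderiv_last_monicInLast, aeval_C]
    rfl
  have minor : ((LLMatrix (monicInLast c)).map ψ).submatrix Fin.castSucc Fin.castSucc =
      Matrix.of fun i j : Fin m => ((i : ℕ)! : MvPolynomial (Fin (m + 1)) ℂ) *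
        ((Matrix.of fun i j : Fin m => pderiv j (c i.succ)).map (rename Fin.castSucc)).submatrix
          Fin.revPerm id i j := by
    ext i j
    simp [entry, Fin.rev_castSucc, nsmul_eq_mul]
  have last_row (j : Fin m) : (LLMatrix (monicInLast c)).map ψ (Fin.last m) j.castSucc = 0 := by
    rw [Matrix.map_apply, entry, Fin.rev_last, hc, map_zero, map_zero, smul_zero]
  rw [LLJacobian_eq_det, AlgHom.map_det, AlgHom.mapMatrix_apply,
    Matrix.det_eq_mul_det_submatrix_castSucc _ last_row, Matrix.map_apply, corner, minor,
    Matrix.det_mul_column, Matrix.det_permute, ← AlgHom.mapMatrix_apply, ← AlgHom.map_det]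
  simp only [map_mul, map_natCast, map_prod, map_intCast, Nat.cast_mul, Nat.cast_prod]
  ring

end LLJacobian

/-- The Tschirnhaus translation `Y = X + b₁/n` does not change the
Lyashko–Looijenga Jacobian: `J(P) = J(Q)`; moreover `J(P)` does not involve
`X` and equals, up to a nonzero scalar, the Jacobian determinant
`det(∂a_i/∂T_j)` of the coefficients `a_2, …, a_n` of `Q`. -/
theorem LLJacobian_translation_invariant (m : ℕ) (n : ℕ) (hn : n = m + 1)
    (b a : Fin n → MvPolynomial (Fin m) ℂ)
    (P Q : MvPolynomial (Fin (m + 1)) ℂ)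
    (hP : P = X (Fin.last m) ^ n +
      ∑ i : Fin n, rename (Fin.castSucc) (b i) * X (Fin.last m) ^ (m - (i : ℕ)))
    (hQ : Q = aeval (fun j : Fin (m + 1) =>
        if j = Fin.last m then
          X (Fin.last m) - C ((n : ℂ)⁻¹) *
            rename (Fin.castSucc) (b ⟨0, by omega⟩)
        else X j) P)
    (ha0 : a ⟨0, by omega⟩ = 0)
    (haQ : Q = X (Fin.last m) ^ n +
      ∑ i : Fin n, rename (Fin.castSucc) (a i) * X (Fin.last m) ^ (m - (i : ℕ))) :
    LLJacobian P = LLJacobian Q ∧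
    pderiv (Fin.last m) (LLJacobian P) = 0 ∧
    ∃ u : ℂ, u ≠ 0 ∧
      LLJacobian P = C u * rename (Fin.castSucc)
        (Matrix.det (fun i j : Fin m =>
          pderiv j (a ⟨(i : ℕ) + 1, by omega⟩))) := by
  subst hn
  replace hP : P = monicInLast b := hP
  replace haQ : Q = monicInLast a := haQ
  set c := C ((↑(m + 1) : ℂ)⁻¹) * rename Fin.castSucc (b ⟨0, Nat.succ_pos m⟩)
  replace hQ : Q = aeval (Function.update X (Fin.last m) (X (Fin.last m) - c)) P := by
    simpa only [← Function.update_apply] using hQ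
  have hc : pderiv (Fin.last m) c = 0 := by
    rw [pderiv_C_mul, pderiv_last_rename_castSucc, mul_zero]
  have hPfree := pderiv_last_LLJacobian_eq_zero (hP ▸ iterate_pderiv_last_monicInLast b)
  have hQfree := pderiv_last_LLJacobian_eq_zero (haQ ▸ iterate_pderiv_last_monicInLast a)
  have hPQ : LLJacobian P = LLJacobian Q := by
    rw [hQ, LLJacobian_aeval_update_X_sub hc, aeval_update_X_of_pderiv_eq_zero _ hPfree]
  have hQval := aeval_update_zero_LLJacobian_monicInLast ha0
  rw [← haQ, aeval_update_X_of_pderiv_eq_zero 0 hQfree] at hQval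
  exact ⟨hPQ, hPfree, _, mul_ne_zero (Nat.cast_ne_zero.mpr (by positivity)) (by simp),
    hPQ.trans hQval⟩
end

section
/- Let c = (1 2 3) in S_3 and let ≼ be the absolute order (u ≼ v iff ℓ(u) + ℓ(u⁻¹v) = ℓ(v), where ℓ is reflection length). For every p ≥ 0, the number of multichains w_1 ≼ w_2 ≼ ⋯ ≼ w_p ≼ c in S_3 equals (p+1)·(3p+2)/2. -/
/-- Reflection length of a permutation: minimal number of transpositions. -/
noncomputable def reflLen {n : ℕ} (σ : Equiv.Perm (Fin n)) : ℕ :=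
  sInf {p | ∃ l : List (Equiv.Perm (Fin n)), l.length = p ∧
    (∀ t ∈ l, t.IsSwap) ∧ l.prod = σ}

/-- Absolute order on `S_n`. -/
noncomputable def absLe {n : ℕ} (u v : Equiv.Perm (Fin n)) : Prop :=
  reflLen u + reflLen (u⁻¹ * v) = reflLen v

instance : DecidablePred (Equiv.Perm.IsSwap (α := Fin 3)) := fun σ =>
  decidable_of_iff (∃ x y : Fin 3, x ≠ y ∧ σ = Equiv.swap x y) Iff.rfl

/-- Explicit reflection length function on `S_3`. -/
def F (σ : Equiv.Perm (Fin 3)) : ℕ :=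
  if σ = 1 then 0 else if σ.IsSwap then 1 else 2

lemma reflLen_eq (σ : Equiv.Perm (Fin 3)) : reflLen σ = F σ := by
  unfold reflLen F
  set S : Set ℕ := {p | ∃ l : List (Equiv.Perm (Fin 3)), l.length = p ∧
    (∀ t ∈ l, t.IsSwap) ∧ l.prod = σ} with hS
  by_cases h1 : σ = 1
  · subst h1
    simp only [if_pos rfl]
    exact Nat.sInf_eq_zero.mpr (Or.inl ⟨[], rfl, by simp, rfl⟩)
  · by_cases hs : σ.IsSwap
    · rw [if_neg h1, if_pos hs]
      have hmem : 1 ∈ S := ⟨[σ], rfl, by simpa using hs, by simp⟩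
      have hub : sInf S ≤ 1 := Nat.sInf_le hmem
      have hne : sInf S ≠ 0 := by
        intro h0
        rcases Nat.sInf_eq_zero.mp h0 with h | h
        · obtain ⟨l, hl, -, hp⟩ := h
          rw [List.length_eq_zero_iff.mp hl] at hp
          exact h1 hp.symm
        · exact absurd hmem (h ▸ fun x => x)
      omega
    · rw [if_neg h1, if_neg hs]
      have hdec : ∃ x y z w : Fin 3, x ≠ y ∧ z ≠ w ∧
          σ = Equiv.swap x y * Equiv.swap z w := by
        have : ∀ τ : Equiv.Perm (Fin 3), ¬τ = 1 → ¬τ.IsSwap → ∃ x y z w : Fin 3,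
            x ≠ y ∧ z ≠ w ∧ τ = Equiv.swap x y * Equiv.swap z w := by decide
        exact this σ h1 hs
      obtain ⟨x, y, z, w, hxy, hzw, hσ⟩ := hdec
      have hmem : 2 ∈ S := ⟨[Equiv.swap x y, Equiv.swap z w], rfl, by
        intro t ht
        simp only [List.mem_cons, List.not_mem_nil, or_false] at ht
        rcases ht with rfl | rfl
        exacts [⟨x, y, hxy, rfl⟩, ⟨z, w, hzw, rfl⟩], by simp [hσ]⟩
      have hub : sInf S ≤ 2 := Nat.sInf_le hmem
      have hm : sInf S ∈ S := Nat.sInf_mem ⟨2, hmem⟩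
      obtain ⟨l, hl, hsw, hp⟩ := hm
      have h0 : sInf S ≠ 0 := by
        intro h0
        rw [h0, List.length_eq_zero_iff] at hl
        rw [hl] at hp
        exact h1 hp.symm
      have h1' : sInf S ≠ 1 := by
        intro h0
        rw [h0] at hl
        obtain ⟨a, rfl⟩ := List.length_eq_one_iff.mp hl
        simp only [List.prod_cons, List.prod_nil, mul_one] at hp
        exact hs (hp ▸ hsw a (by simp))
      omega

lemma absLe_F (u v : Equiv.Perm (Fin 3)) : absLe u v ↔ F u + F (u⁻¹ * v) = F v := by
  unfold absLe
  rw [reflLen_eq, reflLen_eq, reflLen_eq]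

lemma memNC (u : Equiv.Perm (Fin 3)) :
    absLe u (finRotate 3) ↔ (u = 1 ∨ u.IsSwap ∨ u = finRotate 3) := by
  rw [absLe_F]; revert u; decide

lemma absLe_iff (u v : Equiv.Perm (Fin 3))
    (hu : u = 1 ∨ u.IsSwap ∨ u = finRotate 3) (hv : v = 1 ∨ v.IsSwap ∨ v = finRotate 3) :
    absLe u v ↔ (u = 1 ∨ v = finRotate 3 ∨ u = v) := by
  rw [absLe_F]; revert hu hv; revert u v; decide

/-- The three transpositions of `S_3`. -/
def tswap : Fin 3 → Equiv.Perm (Fin 3) := ![Equiv.swap 0 1, Equiv.swap 0 2, Equiv.swap 1 2]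

lemma tswap_isSwap : ∀ k, (tswap k).IsSwap := by decide
lemma one_ne_c : (1 : Equiv.Perm (Fin 3)) ≠ finRotate 3 := by decide
lemma c_ne_one : (finRotate 3 : Equiv.Perm (Fin 3)) ≠ 1 := by decide
lemma tswap_ne_one : ∀ k, tswap k ≠ 1 := by decide
lemma tswap_ne_c : ∀ k, tswap k ≠ finRotate 3 := by decide
lemma tswap_inj : ∀ k k' : Fin 3, tswap k = tswap k' → k = k' := by decide
lemma isSwap_iff (σ : Equiv.Perm (Fin 3)) : σ.IsSwap ↔ ∃ k, σ = tswap k := by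
  revert σ; decide

/-- Index type encoding multichains. -/
abbrev TIdx (p : ℕ) := Fin (p+1) ⊕ (Fin 3 × Σ b : Fin (p+1), Fin (b : ℕ))

def gfun (p : ℕ) : TIdx p → (Fin p → Equiv.Perm (Fin 3))
  | Sum.inl a => fun i => if (i : ℕ) < (a : ℕ) then 1 else finRotate 3
  | Sum.inr ⟨k, ⟨b, a⟩⟩ => fun i =>
      if (i : ℕ) < (a : ℕ) then 1 else if (i : ℕ) < (b : ℕ) then tswap k else finRotate 3

def aOf {p : ℕ} : TIdx p → ℕ
  | Sum.inl a => a
  | Sum.inr ⟨_, ⟨_, a⟩⟩ => a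

def bOf {p : ℕ} : TIdx p → ℕ
  | Sum.inl a => a
  | Sum.inr ⟨_, ⟨b, _⟩⟩ => b

lemma aOf_le_bOf {p : ℕ} (x : TIdx p) : aOf x ≤ bOf x := by
  rcases x with a | ⟨k, ⟨b, a⟩⟩
  · exact le_refl _
  · exact le_of_lt a.isLt

lemma bOf_le {p : ℕ} (x : TIdx p) : bOf x ≤ p := by
  rcases x with a | ⟨k, ⟨b, a⟩⟩
  · exact Nat.lt_succ_iff.mp a.isLt
  · exact Nat.lt_succ_iff.mp b.isLt

lemma gfun_eq_one {p : ℕ} (x : TIdx p) (i : Fin p) :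
    gfun p x i = 1 ↔ (i : ℕ) < aOf x := by
  rcases x with a | ⟨k, ⟨b, a⟩⟩
  · simp only [gfun, aOf]
    split_ifs with h
    · exact iff_of_true rfl h
    · exact iff_of_false c_ne_one h
  · simp only [gfun, aOf]
    split_ifs with h h'
    · exact iff_of_true rfl h
    · exact iff_of_false (tswap_ne_one k) h
    · exact iff_of_false c_ne_one h

lemma gfun_eq_c {p : ℕ} (x : TIdx p) (i : Fin p) :
    gfun p x i = finRotate 3 ↔ bOf x ≤ (i : ℕ) := by
  rcases x with a | ⟨k, ⟨b, a⟩⟩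
  · simp only [gfun, bOf]
    split_ifs with h
    · exact iff_of_false one_ne_c (by omega)
    · exact iff_of_true rfl (by omega)
  · simp only [gfun, bOf]
    split_ifs with h h'
    · have := a.isLt
      exact iff_of_false one_ne_c (by omega)
    · exact iff_of_false (tswap_ne_c k) (by omega)
    · exact iff_of_true rfl (by omega)

lemma aux_a {p : ℕ} {x y : TIdx p} (h : gfun p x = gfun p y) : aOf x ≤ aOf y := by
  by_contra hlt
  push_neg at hlt
  have hxp : aOf x ≤ p := le_trans (aOf_le_bOf x) (bOf_le x)
  have hi : aOf y < p := lt_of_lt_of_le hlt hxp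
  have h1 : gfun p x ⟨aOf y, hi⟩ = 1 := (gfun_eq_one x _).mpr hlt
  have h2 : gfun p y ⟨aOf y, hi⟩ = 1 := h ▸ h1
  have h3 : aOf y < aOf y := (gfun_eq_one y ⟨aOf y, hi⟩).mp h2
  omega

lemma aux_b {p : ℕ} {x y : TIdx p} (h : gfun p x = gfun p y) : bOf x ≤ bOf y := by
  by_contra hlt
  push_neg at hlt
  have hxp : bOf x ≤ p := bOf_le x
  have hi : bOf y < p := lt_of_lt_of_le hlt hxp
  have h1 : gfun p y ⟨bOf y, hi⟩ = finRotate 3 := (gfun_eq_c y _).mpr (le_refl _)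
  have h2 : gfun p x ⟨bOf y, hi⟩ = finRotate 3 := h ▸ h1
  have h3 : bOf x ≤ bOf y := (gfun_eq_c x ⟨bOf y, hi⟩).mp h2
  omega

lemma gfun_inj (p : ℕ) : Function.Injective (gfun p) := by
  intro x y h
  have ha : aOf x = aOf y := le_antisymm (aux_a h) (aux_a h.symm)
  have hb : bOf x = bOf y := le_antisymm (aux_b h) (aux_b h.symm)
  rcases x with a | ⟨k, ⟨b, a⟩⟩ <;> rcases y with a' | ⟨k', ⟨b', a'⟩⟩
  · simp only [aOf] at ha
    exact congrArg Sum.inl (Fin.ext ha)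
  · simp only [aOf, bOf] at ha hb
    have := a'.isLt
    omega
  · simp only [aOf, bOf] at ha hb
    have := a.isLt
    omega
  · simp only [aOf, bOf] at ha hb
    have hbb : b = b' := Fin.ext hb
    subst hbb
    have haa : a = a' := Fin.ext ha
    subst haa
    have hap : (a : ℕ) < p := lt_of_lt_of_le a.isLt (Nat.lt_succ_iff.mp b.isLt)
    have hv := congrFun h ⟨(a : ℕ), hap⟩
    simp only [gfun] at hv
    rw [if_neg (lt_irrefl _), if_pos a.isLt, if_neg (lt_irrefl _), if_pos a.isLt] at hv
    rw [tswap_inj k k' hv]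

lemma gfun_mem (p : ℕ) (x : TIdx p) (i : Fin p) :
    gfun p x i = 1 ∨ (gfun p x i).IsSwap ∨ gfun p x i = finRotate 3 := by
  rcases x with a | ⟨k, ⟨b, a⟩⟩ <;> simp only [gfun] <;> split_ifs <;>
    simp [tswap_isSwap]

lemma gfun_chain (p : ℕ) (x : TIdx p) (i j : Fin p) (hij : i ≤ j) :
    gfun p x i = 1 ∨ gfun p x j = finRotate 3 ∨ gfun p x i = gfun p x j := by
  have hij' : (i : ℕ) ≤ (j : ℕ) := hij
  rcases x with a | ⟨k, ⟨b, a⟩⟩ <;> simp only [gfun] <;> split_ifs <;>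
    first
      | (left; rfl)
      | (right; left; rfl)
      | (right; right; rfl)
      | (exfalso; omega)

/-- Threshold characterization of downward-closed sets in `Fin p`. -/
lemma thresh {p : ℕ} (S : Finset (Fin p))
    (hdc : ∀ i j : Fin p, i ≤ j → j ∈ S → i ∈ S) (i : Fin p) :
    i ∈ S ↔ (i : ℕ) < S.card := by
  constructor
  · intro hi
    have hsub : Finset.Iic i ⊆ S := fun j hj => hdc j i (Finset.mem_Iic.mp hj) hi
    have := Finset.card_le_card hsub
    rw [Fin.card_Iic] at this
    omega
  · intro hc
    by_contra hi
    have hsub : S ⊆ Finset.Iio i := by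
      intro j hj
      rw [Finset.mem_Iio]
      by_contra hji
      push_neg at hji
      exact hi (hdc i j hji hj)
    have := Finset.card_le_card hsub
    rw [Fin.card_Iio] at this
    omega

lemma gfun_surj (p : ℕ) (w : Fin p → Equiv.Perm (Fin 3))
    (hmem : ∀ i : Fin p, w i = 1 ∨ (w i).IsSwap ∨ w i = finRotate 3)
    (hch : ∀ i j : Fin p, i ≤ j → w i = 1 ∨ w j = finRotate 3 ∨ w i = w j) :
    ∃ x : TIdx p, gfun p x = w := by
  classical
  set S1 := Finset.univ.filter (fun i => w i = 1) with hS1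
  set S2 := Finset.univ.filter (fun i => w i ≠ finRotate 3) with hS2
  have hdc1 : ∀ i j : Fin p, i ≤ j → j ∈ S1 → i ∈ S1 := by
    intro i j hij hj
    simp only [hS1, Finset.mem_filter, Finset.mem_univ, true_and] at hj ⊢
    rcases hch i j hij with h | h | h
    · exact h
    · rw [hj] at h; exact absurd h one_ne_c
    · rw [h, hj]
  have hdc2 : ∀ i j : Fin p, i ≤ j → j ∈ S2 → i ∈ S2 := by
    intro i j hij hj
    simp only [hS2, Finset.mem_filter, Finset.mem_univ, true_and] at hj ⊢
    intro hc
    rcases hch i j hij with h | h | h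
    · exact one_ne_c (by rw [← h, hc])
    · exact hj h
    · exact hj (by rw [← h, hc])
  have char1 : ∀ i : Fin p, w i = 1 ↔ (i : ℕ) < S1.card := by
    intro i
    rw [← thresh S1 hdc1 i]
    simp [hS1]
  have char2 : ∀ i : Fin p, w i ≠ finRotate 3 ↔ (i : ℕ) < S2.card := by
    intro i
    rw [← thresh S2 hdc2 i]
    simp [hS2]
  have hsub : S1 ⊆ S2 := by
    intro i hi
    simp only [hS1, Finset.mem_filter, Finset.mem_univ, true_and] at hi
    simp only [hS2, Finset.mem_filter, Finset.mem_univ, true_and]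
    rw [hi]
    exact one_ne_c
  have hab : S1.card ≤ S2.card := Finset.card_le_card hsub
  have hbp : S2.card ≤ p := le_trans (Finset.card_le_univ S2) (by simp)
  rcases eq_or_lt_of_le hab with heq | hlt
  · refine ⟨Sum.inl ⟨S1.card, by omega⟩, ?_⟩
    funext i
    simp only [gfun]
    split_ifs with h
    · exact ((char1 i).mpr h).symm
    · have hcc : ¬ w i ≠ finRotate 3 := fun hc => h (by rw [heq]; exact (char2 i).mp hc)
      exact (not_not.mp hcc).symm
  · have hap : S1.card < p := lt_of_lt_of_le hlt hbp
    set i0 : Fin p := ⟨S1.card, hap⟩ with hi0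
    have h1 : w i0 ≠ 1 := fun hc => by
      have := (char1 i0).mp hc
      simp only [hi0] at this
      omega
    have h2 : w i0 ≠ finRotate 3 := (char2 i0).mpr hlt
    have hsw : (w i0).IsSwap := by
      rcases hmem i0 with h | h | h
      · exact absurd h h1
      · exact h
      · exact absurd h h2
    obtain ⟨k, hk⟩ := (isSwap_iff _).mp hsw
    refine ⟨Sum.inr ⟨k, ⟨⟨S2.card, by omega⟩, ⟨S1.card, hlt⟩⟩⟩, ?_⟩
    funext i
    simp only [gfun]
    split_ifs with h h'
    · exact ((char1 i).mpr h).symm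
    · have hne1 : w i ≠ 1 := fun hc => h ((char1 i).mp hc)
      have hnec : w i ≠ finRotate 3 := (char2 i).mpr h'
      have hww : w i = w i0 := by
        rcases le_total i i0 with hle | hle
        · rcases hch i i0 hle with h | h | h
          · exact absurd h hne1
          · exact absurd h h2
          · exact h
        · rcases hch i0 i hle with h | h | h
          · exact absurd h h1
          · exact absurd h hnec
          · exact h.symm
      rw [hww, hk]
    · exact (not_not.mp (fun hc : w i ≠ finRotate 3 => h' ((char2 i).mp hc))).symm

lemma arith (p s : ℕ) (hsum : s * 2 = (p + 1) * p) :
    (p + 1) + 3 * s = (p + 1) * (3 * p + 2) / 2 := by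
  have key : (p + 1) * (3 * p + 2) = 3 * ((p + 1) * p) + 2 * (p + 1) := by ring
  rw [key, ← hsum]
  omega

/-- Chapoton's formula for `A_2`: the number of multichains
`w_1 ≼ ⋯ ≼ w_p ≼ c` in `NC(S_3)` equals `(p+1)(3p+2)/2`. -/
theorem chapoton_formula_A2 (p : ℕ) (c : Equiv.Perm (Fin 3))
    (hc : c = finRotate 3) :
    Nat.card {w : Fin p → Equiv.Perm (Fin 3) //
        (∀ i j : Fin p, i ≤ j → absLe (w i) (w j)) ∧
        (∀ i : Fin p, absLe (w i) c)} =
      (p + 1) * (3 * p + 2) / 2 := by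
  subst hc
  have e1 : Nat.card {w : Fin p → Equiv.Perm (Fin 3) //
        (∀ i j : Fin p, i ≤ j → absLe (w i) (w j)) ∧
        (∀ i : Fin p, absLe (w i) (finRotate 3))} =
      Nat.card {w : Fin p → Equiv.Perm (Fin 3) //
        (∀ i : Fin p, w i = 1 ∨ (w i).IsSwap ∨ w i = finRotate 3) ∧
        (∀ i j : Fin p, i ≤ j → w i = 1 ∨ w j = finRotate 3 ∨ w i = w j)} := by
    apply Nat.card_congr
    apply Equiv.subtypeEquivRight
    intro w
    constructor
    · rintro ⟨h1, h2⟩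
      have hm : ∀ i, w i = 1 ∨ (w i).IsSwap ∨ w i = finRotate 3 :=
        fun i => (memNC _).mp (h2 i)
      exact ⟨hm, fun i j hij => (absLe_iff _ _ (hm i) (hm j)).mp (h1 i j hij)⟩
    · rintro ⟨hm, hcc⟩
      exact ⟨fun i j hij => (absLe_iff _ _ (hm i) (hm j)).mpr (hcc i j hij),
        fun i => (memNC _).mpr (hm i)⟩
  have e2 : Nat.card (TIdx p) = Nat.card {w : Fin p → Equiv.Perm (Fin 3) //
        (∀ i : Fin p, w i = 1 ∨ (w i).IsSwap ∨ w i = finRotate 3) ∧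
        (∀ i j : Fin p, i ≤ j → w i = 1 ∨ w j = finRotate 3 ∨ w i = w j)} := by
    apply Nat.card_eq_of_bijective
      (fun x => ⟨gfun p x, fun i => gfun_mem p x i, fun i j hij => gfun_chain p x i j hij⟩)
    constructor
    · intro x y hxy
      exact gfun_inj p (congrArg Subtype.val hxy)
    · rintro ⟨w, hm, hcc⟩
      obtain ⟨x, hx⟩ := gfun_surj p w hm hcc
      exact ⟨x, Subtype.ext hx⟩
  rw [e1, ← e2]
  have e3 : Nat.card (TIdx p) = (p + 1) + 3 * (∑ b : Fin (p+1), (b : ℕ)) := by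
    rw [Nat.card_eq_fintype_card]
    simp [Fintype.card_sigma]
  rw [e3]
  have hsum : (∑ b : Fin (p+1), (b : ℕ)) * 2 = (p + 1) * p := by
    rw [Fin.sum_univ_eq_sum_range (fun i => i) (p+1), Finset.sum_range_id_mul_two]
    simp
  exact arith p _ hsum
end
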